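/- Main bound via Jensen: let F be a satisfiable, s-implication-free CNF formula with n(F) ≥ 1, and suppose p_success(F^{[l]}, s) ≥ 2^{−c(F^{[l]})} for every l ∈ SL(F), the combined cost-decrease bound E_l[c(F^{[l]})] ≤ c(F) − n_N·2S/|SL(F)| − n_C/|SL(F)| holds, and S ≥ 2 ln 2 − 1. Then p_success(F, s) ≥ 2^{−c(F)}. -/

import Mathlib

attribute [local instance] Classical.propDecidable

noncomputable section

structure CNF where
  clauses : Finset (Finset (ℕ × Bool))
  vars : Finset ℕ

def litSat (α : ℕ → Bool) (l : ℕ × Bool) : Prop := α l.1 = l.2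

def clauseSat (α : ℕ → Bool) (C : Finset (ℕ × Bool)) : Prop := ∃ l ∈ C, litSat α l

def Sat (F : CNF) (α : ℕ → Bool) : Prop := ∀ C ∈ F.clauses, clauseSat α C

def CNF.Satisfiable (F : CNF) : Prop := ∃ α, Sat F α

/-- Restrict `F` by the literal `l` (set the variable of `l` so that `l` is true). -/
def restrict (F : CNF) (l : ℕ × Bool) : CNF :=
  ⟨(F.clauses.filter (fun C => l ∉ C)).image (fun C => C.filter (fun m => m ≠ (l.1, !l.2))),
   F.vars.erase l.1⟩

/-- A variable is frozen if all satisfying assignments agree on it. -/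
def Frozen (F : CNF) (x : ℕ) : Prop :=
  x ∈ F.vars ∧ ∀ α β, Sat F α → Sat F β → α x = β x

/-- Satisfying literals: literals over the variables whose restriction stays satisfiable. -/
def SL (F : CNF) : Finset (ℕ × Bool) :=
  (F.vars ×ˢ ({true, false} : Finset Bool)).filter (fun l => (restrict F l).Satisfiable)

/-- Probability that `AssignSatisfiableLiterals` outputs `α` (with fuel). -/
def prAux : ℕ → CNF → (ℕ → Bool) → ℝ
  | 0, _, _ => 1
  | n+1, F, α =>
    if F.vars = ∅ then 1
    else ((SL F).card : ℝ)⁻¹ *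
      ∑ l ∈ (SL F).filter (fun l => litSat α l), prAux n (restrict F l) α

def pr (F : CNF) (α : ℕ → Bool) : ℝ := prAux F.vars.card F α

/-- A literal is `s`-implied if it is implied by at most `s` clauses of `F`. -/
def sImplied (F : CNF) (s : ℕ) (l : ℕ × Bool) : Prop :=
  ∃ G : Finset (Finset (ℕ × Bool)), G ⊆ F.clauses ∧ G.card ≤ s ∧
    ∀ α : ℕ → Bool, (∀ C ∈ G, clauseSat α C) → litSat α l

def ImplicationFree (F : CNF) (s : ℕ) : Prop :=
  ∀ l : ℕ × Bool, l.1 ∈ F.vars → ¬ sImplied F s l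

def impliedVars (F : CNF) (s : ℕ) : Finset ℕ :=
  F.vars.filter (fun x => sImplied F s (x, true) ∨ sImplied F s (x, false))

def impliedVal (F : CNF) (s : ℕ) (x : ℕ) : Bool :=
  if sImplied F s (x, true) then true else false

def closureAux (s : ℕ) : ℕ → CNF → CNF
  | 0, F => F
  | n+1, F =>
    if h : (impliedVars F s).Nonempty then
      closureAux s n (restrict F ((impliedVars F s).min' h, impliedVal F s ((impliedVars F s).min' h)))
    else F

/-- Repeatedly fix all `s`-implied literals. -/
def pclosure (s : ℕ) (F : CNF) : CNF := closureAux s F.vars.card F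

/-- `x` is guessed in the run of PPSZ with assignment `β` and permutation `π`. -/
def Guessed (s : ℕ) (β : ℕ → Bool) (x : ℕ) : CNF → List ℕ → Prop
  | _, [] => False
  | F, y :: π =>
    if x ∉ (pclosure s F).vars then False
    else if y = x then True
    else Guessed s β x
      (if y ∈ (pclosure s F).vars then restrict (pclosure s F) (y, β y) else pclosure s F) π

/-- Probability over a uniformly random permutation of the variables that `x` is guessed. -/
def Pguessed (s : ℕ) (F : CNF) (x : ℕ) (α : ℕ → Bool) : ℝ :=
  ((F.vars.toList.permutations.countP (fun π => decide (Guessed s α x F π))) : ℝ) /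
    (Nat.factorial F.vars.card)

/-- The final restricted formula of a PPSZ run. -/
def runPPSZ (s : ℕ) (β : ℕ → Bool) : CNF → List ℕ → CNF
  | F, [] => pclosure s F
  | F, y :: π =>
    runPPSZ s β
      (if y ∈ (pclosure s F).vars then restrict (pclosure s F) (y, β y) else pclosure s F) π

/-- Success probability of PPSZ over uniform `β` and uniform permutation. -/
def psuccess (s : ℕ) (F : CNF) : ℝ :=
  (∑ b ∈ F.vars.powerset,
    ((F.vars.toList.permutations.countP
      (fun π => decide ((runPPSZ s (fun y => decide (y ∈ b)) F π).clauses = ∅))) : ℝ)) /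
  (2 ^ F.vars.card * Nat.factorial F.vars.card)

def asg (b : Finset ℕ) : ℕ → Bool := fun y => decide (y ∈ b)

/-- The satisfying assignments of `F`, encoded as subsets of the variable set. -/
def satAssignments (F : CNF) : Finset (Finset ℕ) :=
  F.vars.powerset.filter (fun b => Sat F (asg b))

/-- The PPSZ cost of variable `x` in `F`, with guessing bound `S`. -/
def cost (s : ℕ) (S : ℝ) (F : CNF) (x : ℕ) : ℝ :=
  if x ∉ F.vars then 0
  else if Frozen F x then
    ∑ b ∈ satAssignments F, pr F (asg b) * Pguessed s F x (asg b)
  else S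

def totalCost (s : ℕ) (S : ℝ) (F : CNF) : ℝ := ∑ x ∈ F.vars, cost s S F x

/-! For an implication-free formula the closure step of PPSZ does nothing, so the first variable of
the random permutation is set by the random assignment; this gives
`2 n · p_success(F, s) = Σ_{l ∈ SL(F)} p_success(F^{[l]}, s)`, unsatisfiable restrictions
contributing nothing. Jensen's inequality for `t ↦ 2 ^ (-t)` bounds this sum below by
`|SL(F)| · 2 ^ (-E_l[c(F^{[l]})])`, and the cost-decrease bound reduces the claim to
`2 n ≤ |SL(F)| · 2 ^ ((2 S n_N + n_C) / |SL(F)|)`. As `|SL(F)| = 2 n_N + n_C` and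
`n = n_N + n_C`, the tangent-line bound `2 ^ E ≥ 2 (1 + (E - 1) ln 2)` at `E = 1` reduces this to
`n_N (1 + 2 (S - 1) ln 2) ≥ 0`, and `1 + 2 (S - 1) ln 2 ≥ (1 - 2 ln 2) ^ 2` for `S ≥ 2 ln 2 - 1`. -/

open Finset hiding restrict

lemma Sat.update_of_restrict {F : CNF} {l : ℕ × Bool} {α : ℕ → Bool}
    (h : Sat (restrict F l) α) : Sat F (Function.update α l.1 l.2) := by
  intro C hC
  by_cases hl : l ∈ C
  · exact ⟨l, hl, by simp [litSat]⟩
  · have hC' : C.filter (fun m => m ≠ (l.1, !l.2)) ∈ (restrict F l).clauses :=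
      mem_image.mpr ⟨C, mem_filter.mpr ⟨hC, hl⟩, rfl⟩
    obtain ⟨m, hm, hmα⟩ := h _ hC'
    obtain ⟨hmC, hm_ne⟩ := mem_filter.mp hm
    have hvar : m.1 ≠ l.1 := by
      rintro hvar
      rcases Bool.eq_or_eq_not m.2 l.2 with hval | hval
      · exact hl (Prod.ext hvar hval ▸ hmC)
      · exact hm_ne (Prod.ext hvar hval)
    exact ⟨m, hmC, by simpa [litSat, Function.update_of_ne hvar] using hmα⟩

lemma Sat.restrict {F : CNF} {α : ℕ → Bool} {l : ℕ × Bool}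
    (hα : Sat F α) (hl : litSat α l) : Sat (restrict F l) α := by
  intro C hC
  obtain ⟨D, hD, rfl⟩ := mem_image.mp hC
  obtain ⟨hDF, hlD⟩ := mem_filter.mp hD
  obtain ⟨m, hm, hmα⟩ := hα D hDF
  refine ⟨m, mem_filter.mpr ⟨hm, ?_⟩, hmα⟩
  rintro rfl
  simp_all [litSat]

lemma CNF.Satisfiable.of_restrict {F : CNF} {l : ℕ × Bool} (h : (restrict F l).Satisfiable) :
    F.Satisfiable :=
  let ⟨_, hα⟩ := h; ⟨_, hα.update_of_restrict⟩

lemma satisfiable_restrict_iff {F : CNF} {x : ℕ} {b : Bool} :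
    (restrict F (x, b)).Satisfiable ↔ ∃ α, Sat F α ∧ α x = b := by
  constructor
  · rintro ⟨α, hα⟩
    exact ⟨_, hα.update_of_restrict, by simp⟩
  · rintro ⟨α, hα, hx⟩
    exact ⟨α, hα.restrict hx⟩

lemma card_filter_satisfiable_restrict {F : CNF} (hF : F.Satisfiable) {x : ℕ}
    (hx : x ∈ F.vars) :
    (({true, false} : Finset Bool).filter fun b => (restrict F (x, b)).Satisfiable).card =
      if Frozen F x then 1 else 2 := by
  obtain ⟨α₀, hα₀⟩ := hF
  simp only [satisfiable_restrict_iff]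
  by_cases hfrozen : Frozen F x
  · have hval : ∀ b, (∃ α, Sat F α ∧ α x = b) ↔ b = α₀ x := fun b =>
      ⟨fun ⟨α, hα, hαx⟩ => hαx ▸ hfrozen.2 α α₀ hα hα₀, fun hb => ⟨α₀, hα₀, hb.symm⟩⟩
    cases h : α₀ x <;> simp [hval, h, hfrozen, filter_eq']
  · obtain ⟨α, β, hα, hβ, hαβ⟩ : ∃ α β, Sat F α ∧ Sat F β ∧ α x ≠ β x := by
      by_contra! h
      exact hfrozen ⟨hx, h⟩
    have hval : ∀ b, ∃ γ, Sat F γ ∧ γ x = b := fun b => by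
      by_cases hb : α x = b
      · exact ⟨α, hα, hb⟩
      · exact ⟨β, hβ, by cases b <;> simp_all⟩
    simp [hval, hfrozen]

lemma card_SL {F : CNF} (hF : F.Satisfiable) :
    (SL F).card = 2 * (F.vars.filter (fun x => ¬ Frozen F x)).card
      + (F.vars.filter (fun x => Frozen F x)).card := by
  rw [SL, card_filter, sum_product]
  rw [sum_congr rfl fun x hx => by rw [← card_filter, card_filter_satisfiable_restrict hF hx],
    sum_ite]
  simp only [sum_const, smul_eq_mul]
  ring

lemma pclosure_eq_self {F : CNF} {s : ℕ} (h : ImplicationFree F s) : pclosure s F = F := by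
  have hempty : ¬ (impliedVars F s).Nonempty := fun ⟨x, hx⟩ => by
    obtain ⟨hxF, himp⟩ := mem_filter.mp hx
    exact himp.elim (h (x, true) hxF) (h (x, false) hxF)
  unfold pclosure
  cases F.vars.card with
  | zero => rfl
  | succ k => rw [closureAux, dif_neg hempty]

lemma CNF.Satisfiable.of_pclosure {s : ℕ} {F : CNF} (h : (pclosure s F).Satisfiable) :
    F.Satisfiable := by
  suffices ∀ k G, (closureAux s k G).Satisfiable → G.Satisfiable from this _ _ h
  intro k
  induction k with
  | zero => exact fun _ => id
  | succ k ih =>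
    intro G hG
    rw [closureAux] at hG
    split at hG
    · exact (ih _ hG).of_restrict
    · exact hG

lemma CNF.Satisfiable.of_runPPSZ {s : ℕ} {β : ℕ → Bool} {π : List ℕ} {F : CNF}
    (h : (runPPSZ s β F π).clauses = ∅) : F.Satisfiable := by
  induction π generalizing F with
  | nil =>
    refine .of_pclosure (s := s) ⟨fun _ => true, fun C hC => ?_⟩
    simp only [runPPSZ] at h
    simp [h] at hC
  | cons y π ih =>
    have hG := ih h
    split at hG
    · exact hG.of_restrict.of_pclosure
    · exact hG.of_pclosure

lemma psuccess_eq_zero {s : ℕ} {F : CNF} (h : ¬ F.Satisfiable) : psuccess s F = 0 := by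
  rw [psuccess, sum_eq_zero, zero_div]
  intro b _
  rw [Nat.cast_eq_zero, List.countP_eq_zero]
  exact fun π _ hπ => h (.of_runPPSZ (of_decide_eq_true hπ))

lemma runPPSZ_cons_of_implicationFree {s : ℕ} {F : CNF} (h : ImplicationFree F s)
    (β : ℕ → Bool) {y : ℕ} (hy : y ∈ F.vars) (π : List ℕ) :
    runPPSZ s β F (y :: π) = runPPSZ s β (restrict F (y, β y)) π := by
  rw [runPPSZ, pclosure_eq_self h, if_pos hy]

lemma runPPSZ_congr {s : ℕ} {β β' : ℕ → Bool} {π : List ℕ} (h : ∀ y ∈ π, β y = β' y)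
    (F : CNF) : runPPSZ s β F π = runPPSZ s β' F π := by
  induction π generalizing F with
  | nil => rfl
  | cons y π ih =>
    simp only [runPPSZ, h y List.mem_cons_self]
    exact ih (fun z hz => h z (List.mem_cons_of_mem _ hz)) _

lemma List.permutations_perm_flatMap_erase {α : Type*} [DecidableEq α] {l : List α}
    (hl : l.Nodup) (hne : l ≠ []) :
    l.permutations.Perm (l.flatMap fun y => (l.erase y).permutations.map (y :: ·)) := by
  have hnodup : (l.flatMap fun y => (l.erase y).permutations.map (y :: ·)).Nodup := by
    refine List.nodup_flatMap.mpr ⟨fun y _ => ?_, hl.imp fun hxy => ?_⟩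
    · exact (List.nodup_permutations _ (hl.erase y)).map List.cons_injective
    · simp only [Function.onFun, List.disjoint_left, List.mem_map]
      rintro _ ⟨_, -, rfl⟩ ⟨_, -, h⟩
      exact hxy (List.cons_eq_cons.mp h).1.symm
  refine (List.perm_ext_iff_of_nodup (List.nodup_permutations _ hl) hnodup).mpr fun π => ?_
  simp only [List.mem_permutations, List.mem_flatMap, List.mem_map]
  constructor
  · cases π with
    | nil => exact fun hπ => absurd hπ.symm.eq_nil hne
    | cons y w =>
      intro hπ
      obtain ⟨hy, hw⟩ := List.cons_perm_iff_perm_erase.mp hπ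
      exact ⟨y, hy, w, hw, rfl⟩
  · rintro ⟨y, hy, w, hw, rfl⟩
    exact List.cons_perm_iff_perm_erase.mpr ⟨hy, hw⟩

lemma List.countP_permutations {α : Type*} [DecidableEq α] {l : List α} (hl : l.Nodup)
    (hne : l ≠ []) (p : List α → Bool) :
    l.permutations.countP p =
      ∑ y ∈ l.toFinset, (l.erase y).permutations.countP (fun π => p (y :: π)) := by
  rw [(List.permutations_perm_flatMap_erase hl hne).countP_eq, List.countP_flatMap,
    List.sum_toFinset _ hl]
  simp only [Function.comp_def, List.countP_map]

def successCount (s : ℕ) (β : ℕ → Bool) (F : CNF) : ℕ :=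
  F.vars.toList.permutations.countP (fun π => decide ((runPPSZ s β F π).clauses = ∅))

def successTotal (s : ℕ) (F : CNF) : ℕ := ∑ b ∈ F.vars.powerset, successCount s (asg b) F

lemma psuccess_eq_successTotal_div (s : ℕ) (F : CNF) :
    psuccess s F = successTotal s F / (2 ^ F.vars.card * F.vars.card.factorial) := by
  rw [psuccess, successTotal, Nat.cast_sum]
  rfl

lemma successCount_congr {s : ℕ} {β β' : ℕ → Bool} {F : CNF}
    (h : ∀ z ∈ F.vars, β z = β' z) : successCount s β F = successCount s β' F := by
  refine List.countP_congr fun π hπ => ?_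
  have hπF : ∀ z ∈ π, β z = β' z := fun z hz =>
    h z (mem_toList.mp ((List.mem_permutations.mp hπ).mem_iff.mp hz))
  rw [runPPSZ_congr hπF]

lemma successCount_eq_sum_restrict {s : ℕ} {F : CNF} (hfree : ImplicationFree F s)
    (hn : F.vars.Nonempty) (β : ℕ → Bool) :
    successCount s β F = ∑ y ∈ F.vars, successCount s β (restrict F (y, β y)) := by
  rw [successCount, List.countP_permutations F.vars.nodup_toList (by simpa using hn.ne_empty),
    toList_toFinset]
  refine sum_congr rfl fun y hy => ?_
  have hperm : (F.vars.toList.erase y).Perm (restrict F (y, β y)).vars.toList := by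
    refine (List.perm_ext_iff_of_nodup (F.vars.nodup_toList.erase y) (nodup_toList _)).mpr
      fun z => ?_
    simp [restrict, F.vars.nodup_toList.mem_erase_iff]
  simp only [runPPSZ_cons_of_implicationFree hfree β hy]
  exact hperm.permutations.countP_eq _

lemma sum_powerset_successCount_restrict {s : ℕ} {F : CNF} {y : ℕ} (hy : y ∈ F.vars) :
    ∑ b ∈ F.vars.powerset, successCount s (asg b) (restrict F (y, asg b y)) =
      ∑ c ∈ ({true, false} : Finset Bool), successTotal s (restrict F (y, c)) := by
  have hy' : y ∉ F.vars.erase y := notMem_erase y F.vars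
  have hfalse : ∀ b ∈ (F.vars.erase y).powerset,
      successCount s (asg b) (restrict F (y, asg b y)) =
        successCount s (asg b) (restrict F (y, false)) := fun b hb => by
    have hyb : y ∉ b := fun h => hy' (mem_powerset.mp hb h)
    simp [asg, hyb]
  have hinsert : ∀ b ∈ (F.vars.erase y).powerset,
      successCount s (asg (insert y b)) (restrict F (y, true)) =
        successCount s (asg b) (restrict F (y, true)) := fun b _ =>
    successCount_congr fun z hz => by simp [asg, (mem_erase.mp hz).1]
  have htrue : ∀ b, asg (insert y b) y = true := fun b => by simp [asg]
  rw [← insert_erase hy, sum_powerset_insert hy', sum_pair (by decide), add_comm]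
  simp only [htrue]
  rw [sum_congr rfl hinsert, sum_congr rfl hfalse]
  rfl

lemma successTotal_eq_sum_restrict {s : ℕ} {F : CNF} (hfree : ImplicationFree F s)
    (hn : F.vars.Nonempty) :
    successTotal s F =
      ∑ l ∈ F.vars ×ˢ ({true, false} : Finset Bool), successTotal s (restrict F l) := by
  rw [successTotal, sum_congr rfl fun b _ => successCount_eq_sum_restrict hfree hn (asg b),
    sum_comm, sum_product]
  exact sum_congr rfl fun y hy => sum_powerset_successCount_restrict hy

lemma two_mul_card_mul_psuccess_eq_sum_restrict {s : ℕ} {F : CNF} (hfree : ImplicationFree F s)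
    (hn : F.vars.Nonempty) :
    2 * (F.vars.card : ℝ) * psuccess s F =
      ∑ l ∈ F.vars ×ˢ ({true, false} : Finset Bool), psuccess s (restrict F l) := by
  obtain ⟨k, hk⟩ : ∃ k, F.vars.card = k + 1 := Nat.exists_eq_add_one.mpr hn.card_pos
  have hvars : ∀ l ∈ F.vars ×ˢ ({true, false} : Finset Bool), (restrict F l).vars.card = k :=
    fun l hl => by simp [restrict, card_erase_of_mem (mem_product.mp hl).1, hk]
  rw [sum_congr rfl fun l hl => by rw [psuccess_eq_successTotal_div, hvars l hl], ← sum_div,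
    ← Nat.cast_sum, ← successTotal_eq_sum_restrict hfree hn, psuccess_eq_successTotal_div, hk,
    Nat.factorial_succ]
  push_cast
  field_simp
  ring

lemma two_mul_card_mul_psuccess_eq_sum_SL {s : ℕ} {F : CNF} (hfree : ImplicationFree F s)
    (hn : F.vars.Nonempty) :
    2 * (F.vars.card : ℝ) * psuccess s F = ∑ l ∈ SL F, psuccess s (restrict F l) := by
  rw [two_mul_card_mul_psuccess_eq_sum_restrict hfree hn, SL, sum_filter_of_ne]
  exact fun l _ h => by_contra fun hl => h (psuccess_eq_zero hl)

lemma card_mul_two_rpow_neg_mean_le {ι : Type*} {t : Finset ι} (ht : t.Nonempty) (c : ι → ℝ) :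
    t.card * (2 : ℝ) ^ (-((t.card : ℝ)⁻¹ * ∑ i ∈ t, c i)) ≤ ∑ i ∈ t, (2 : ℝ) ^ (-c i) := by
  have hcard : (0 : ℝ) < t.card := by exact_mod_cast ht.card_pos
  have hjensen := (convexOn_rpow_left two_pos).map_sum_le (t := t) (w := fun _ => (t.card : ℝ)⁻¹)
    (p := fun i => -c i) (fun _ _ => by positivity) (by simp [hcard.ne'])
    (fun _ _ => Set.mem_univ _)
  simp only [smul_eq_mul, ← mul_sum, sum_neg_distrib, mul_neg] at hjensen
  exact (le_inv_mul_iff₀ hcard).mp hjensen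

lemma two_mul_add_le_mul_two_rpow {a f S : ℝ} (ha : 0 ≤ a) (hpos : 0 < 2 * a + f)
    (hS : 2 * Real.log 2 - 1 ≤ S) :
    2 * (a + f) ≤ (2 * a + f) * (2 : ℝ) ^ (a * (2 * S) / (2 * a + f) + f / (2 * a + f)) := by
  set M := 2 * a + f with hM
  set E := a * (2 * S) / M + f / M
  set L := Real.log 2
  have hME : M * E = a * (2 * S) + f := by simp only [E]; field_simp
  have htangent : 2 * (1 + (E - 1) * L) ≤ (2 : ℝ) ^ E := by
    calc 2 * (1 + (E - 1) * L) ≤ 2 * Real.exp ((E - 1) * L) := by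
          linarith [Real.add_one_le_exp ((E - 1) * L)]
      _ = (2 : ℝ) ^ E := by
          rw [mul_comm (E - 1), ← Real.rpow_def_of_pos two_pos, Real.rpow_sub_one two_ne_zero]
          ring
  have hfactor : 0 ≤ 1 + 2 * (S - 1) * L := by
    nlinarith [sq_nonneg (1 - 2 * L), mul_nonneg (sub_nonneg.mpr hS) (Real.log_pos one_lt_two).le]
  calc 2 * (a + f) ≤ 2 * (a + f) + 2 * a * (1 + 2 * (S - 1) * L) := by
        nlinarith [mul_nonneg ha hfactor]
    _ = M * (2 * (1 + (E - 1) * L)) := by linear_combination (-2 * L) * hME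
    _ ≤ M * (2 : ℝ) ^ E := mul_le_mul_of_nonneg_left htangent hpos.le

theorem psuccess_ge_cost_general (s : ℕ) (S : ℝ) (F : CNF) (hF : F.Satisfiable)
    (hfree : ImplicationFree F s) (hn : F.vars.Nonempty)
    (hS0 : 2 * Real.log 2 - 1 ≤ S)
    (hsucc : ∀ l ∈ SL F, (2:ℝ) ^ (-(totalCost s S (restrict F l))) ≤ psuccess s (restrict F l))
    (hcost : ((SL F).card : ℝ)⁻¹ * ∑ l ∈ SL F, totalCost s S (restrict F l) ≤
      totalCost s S F
        - ((F.vars.filter (fun x => ¬ Frozen F x)).card : ℝ) * (2 * S) / ((SL F).card : ℝ)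
        - ((F.vars.filter (fun x => Frozen F x)).card : ℝ) / ((SL F).card : ℝ)) :
    (2:ℝ) ^ (-(totalCost s S F)) ≤ psuccess s F := by
  set N : ℝ := ↑F.vars.card
  set M : ℝ := ↑(SL F).card
  set a : ℝ := ↑(F.vars.filter fun x => ¬ Frozen F x).card
  set f : ℝ := ↑(F.vars.filter fun x => Frozen F x).card
  have hM : M = 2 * a + f := by simp only [M, a, f]; exact_mod_cast card_SL hF
  have hN : N = a + f := by
    simp only [N, a, f, add_comm]
    exact_mod_cast (card_filter_add_card_filter_not (s := F.vars) (fun x => Frozen F x)).symm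
  have hNpos : 0 < N := Nat.cast_pos.mpr hn.card_pos
  have hMpos : 0 < M := by linarith [show 0 ≤ a by positivity]
  have hSL : (SL F).Nonempty := card_pos.mp (Nat.cast_pos.mp hMpos)
  have hkey := two_mul_add_le_mul_two_rpow (by positivity) (hM ▸ hMpos) hS0
  rw [← hM, ← hN] at hkey
  refine le_of_mul_le_mul_left ?_ (mul_pos two_pos hNpos)
  rw [two_mul_card_mul_psuccess_eq_sum_SL hfree hn]
  calc 2 * N * (2 : ℝ) ^ (-totalCost s S F)
      ≤ M * (2 : ℝ) ^ (a * (2 * S) / M + f / M) * (2 : ℝ) ^ (-totalCost s S F) := by gcongr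
    _ = M * (2 : ℝ) ^ (a * (2 * S) / M + f / M - totalCost s S F) := by
        rw [sub_eq_add_neg, Real.rpow_add two_pos (a * (2 * S) / M + f / M), mul_assoc]
    _ ≤ M * (2 : ℝ) ^ (-(M⁻¹ * ∑ l ∈ SL F, totalCost s S (restrict F l))) := by
        gcongr
        · norm_num
        · linarith
    _ ≤ ∑ l ∈ SL F, (2 : ℝ) ^ (-totalCost s S (restrict F l)) :=
        card_mul_two_rpow_neg_mean_le hSL _
    _ ≤ ∑ l ∈ SL F, psuccess s (restrict F l) := sum_le_sum hsucc

/-- Main bound via Jensen: given the induction hypothesis on all `F^{[l]}`, the combined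
cost-decrease bound, and `S ≥ 2 ln 2 - 1`, we get `p_success(F,s) ≥ 2^{-c(F)}`. -/
theorem psuccess_ge_cost (s : ℕ) (S : ℝ) (F : CNF) (hF : F.Satisfiable)
    (hfree : ImplicationFree F s) (hn : F.vars.Nonempty)
    (hS0 : 2 * Real.log 2 - 1 ≤ S) (hS1 : S ≤ 1)
    (hsucc : ∀ l ∈ SL F, (2:ℝ) ^ (-(totalCost s S (restrict F l))) ≤ psuccess s (restrict F l))
    (hcost : ((SL F).card : ℝ)⁻¹ * ∑ l ∈ SL F, totalCost s S (restrict F l) ≤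
      totalCost s S F
        - ((F.vars.filter (fun x => ¬ Frozen F x)).card : ℝ) * (2 * S) / ((SL F).card : ℝ)
        - ((F.vars.filter (fun x => Frozen F x)).card : ℝ) / ((SL F).card : ℝ)) :
    (2:ℝ) ^ (-(totalCost s S F)) ≤ psuccess s F :=
  psuccess_ge_cost_general s S F hF hfree hn hS0 hsucc hcost

end
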